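/- Termination of the synthesis algorithm: for every finite assumption set Γ and all session contracts ρ and σ, the recursive computation of Synth(Γ,ρ,σ) terminates; i.e., the recursion defining Synth is well-founded, so Synth is a total function returning a finite set of orchestrators. -/

import Mathlib

/-! Core formalisation: session contracts, session orchestrators, orchestrated systems,
    buffers, (finite and infinite) sequences of orchestration actions, respectfulness,
    and the compliance relations. Names are natural numbers. Recursion binders use
    de Bruijn indices (`var n`, with `mu` binding index 0); equi-recursive identification
    of `rec x.σ` with its unfolding is realised by unfolding rules in the LTSs. -/

abbrev Name := ℕ

/-- Actions of session contracts: an input `a` or an output `ā`. -/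
inductive Act : Type where
  | inp : Name → Act
  | out : Name → Act
deriving DecidableEq

/-- Orchestration actions:
    `cIn a` = ⟨a,ε⟩, `cSync a` = ⟨a,ā⟩ (category ι_L);
    `sIn a` = ⟨ε,a⟩, `sSync a` = ⟨ā,a⟩ (category ι_R);
    `cOut a` = ⟨ā,ε⟩, `sOut a` = ⟨ε,ā⟩ (category o). -/
inductive OAct : Type where
  | cIn   : Name → OAct
  | cSync : Name → OAct
  | sIn   : Name → OAct
  | sSync : Name → OAct
  | cOut  : Name → OAct
  | sOut  : Name → OAct
deriving DecidableEq

def OAct.catL : OAct → Prop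
  | .cIn _ => True
  | .cSync _ => True
  | _ => False

def OAct.catR : OAct → Prop
  | .sIn _ => True
  | .sSync _ => True
  | _ => False

def OAct.catO : OAct → Prop
  | .cOut _ => True
  | .sOut _ => True
  | _ => False

/-- Raw session contracts: `one` = 1 (success), `ext l` = external choice a₁.σ₁+⋯+aₙ.σₙ,
    `int l` = internal choice ā₁.σ₁⊕⋯⊕āₙ.σₙ, de Bruijn variables and recursion. -/
inductive SC : Type where
  | one : SC
  | ext : List (Name × SC) → SC
  | int : List (Name × SC) → SC
  | var : ℕ → SC
  | mu : SC → SC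

namespace SC

/-- Substitution of the (closed) term `u` for the variable of de Bruijn index `k`. -/
def subst (u : SC) : SC → ℕ → SC
  | SC.one, _ => SC.one
  | SC.ext l, k => SC.ext (l.attach.map fun p => (p.1.1, subst u p.1.2 k))
  | SC.int l, k => SC.int (l.attach.map fun p => (p.1.1, subst u p.1.2 k))
  | SC.var x, k => if x = k then u else SC.var x
  | SC.mu b, k => SC.mu (subst u b (k + 1))
termination_by s _ => sizeOf s
decreasing_by
  · obtain ⟨⟨a1, s1⟩, hp⟩ := p
    have := List.sizeOf_lt_of_mem hp
    simp_wf; simp at this; omega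
  · obtain ⟨⟨a1, s1⟩, hp⟩ := p
    have := List.sizeOf_lt_of_mem hp
    simp_wf; simp at this; omega
  · simp_wf

/-- One-step unfolding of a recursive contract: `rec x.σ  ↦  σ[rec x.σ / x]`. -/
def unfold (b : SC) : SC := subst (SC.mu b) b 0

/-- All free de Bruijn indices are `< n`. -/
inductive ClosedAbove : SC → ℕ → Prop where
  | one : ∀ n, ClosedAbove .one n
  | ext : ∀ l n, (∀ p ∈ l, ClosedAbove p.2 n) → ClosedAbove (.ext l) n
  | int : ∀ l n, (∀ p ∈ l, ClosedAbove p.2 n) → ClosedAbove (.int l) n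
  | var : ∀ x n, x < n → ClosedAbove (.var x) n
  | mu : ∀ b n, ClosedAbove b (n + 1) → ClosedAbove (.mu b) n

/-- Structural well-formedness: choices are nonempty with pairwise distinct names,
    and recursion bodies are not variables (contractiveness). -/
inductive WF : SC → Prop where
  | one : WF .one
  | ext : ∀ l, l ≠ [] → (l.map Prod.fst).Nodup → (∀ p ∈ l, WF p.2) → WF (.ext l)
  | int : ∀ l, l ≠ [] → (l.map Prod.fst).Nodup → (∀ p ∈ l, WF p.2) → WF (.int l)
  | var : ∀ x, WF (.var x)
  | mu : ∀ b, (∀ x, b ≠ .var x) → WF b → WF (.mu b)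

/-- τ-transitions of session contracts (with equi-recursive unfolding). -/
inductive Tau : SC → SC → Prop where
  | int : ∀ l p, p ∈ l → Tau (SC.int l) (SC.int [p])
  | unfold : ∀ b σ', Tau b.unfold σ' → Tau (SC.mu b) σ'

/-- Labelled transitions of session contracts (with equi-recursive unfolding). -/
inductive Step : SC → Act → SC → Prop where
  | ext : ∀ l a σ, (a, σ) ∈ l → Step (SC.ext l) (Act.inp a) σ
  | out : ∀ a σ, Step (SC.int [(a, σ)]) (Act.out a) σ
  | unfold : ∀ b α σ', Step b.unfold α σ' → Step (SC.mu b) α σ'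

end SC

/-- `σ` is a session contract: a closed, well-formed raw session contract. -/
def IsContract (σ : SC) : Prop := σ.ClosedAbove 0 ∧ σ.WF

/-- Raw session orchestrators: `one` = 1, `choice l` = μ₁.f₁ ∨ ⋯ ∨ μₙ.fₙ,
    de Bruijn variables and recursion. -/
inductive Orch : Type where
  | one : Orch
  | choice : List (OAct × Orch) → Orch
  | var : ℕ → Orch
  | mu : Orch → Orch

namespace Orch

/-- Simultaneous substitution of the (closed) orchestrators `θ` for the free variables. -/
def msubst : Orch → List Orch → Orch
  | .one, _ => .one
  | .choice l, θ => .choice (l.attach.map fun p => (p.1.1, msubst p.1.2 θ))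
  | .var x, θ => θ.getD x (.var x)
  | .mu b, θ => .mu (msubst b (Orch.var 0 :: θ))
termination_by f _ => sizeOf f
decreasing_by
  · obtain ⟨⟨a1, s1⟩, hp⟩ := p
    have := List.sizeOf_lt_of_mem hp
    simp_wf; simp at this; omega
  · simp_wf

/-- One-step unfolding of a recursive orchestrator. -/
def unfold (b : Orch) : Orch := msubst b [Orch.mu b]

inductive ClosedAbove : Orch → ℕ → Prop where
  | one : ∀ n, ClosedAbove .one n
  | choice : ∀ l n, (∀ p ∈ l, ClosedAbove p.2 n) → ClosedAbove (.choice l) n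
  | var : ∀ x n, x < n → ClosedAbove (.var x) n
  | mu : ∀ b n, ClosedAbove b (n + 1) → ClosedAbove (.mu b) n

/-- Structural well-formedness of orchestrators: every choice is nonempty and either all
    its prefixes are of category ι_L, or all of category ι_R, or it is a single prefix of
    category o; recursion bodies are not variables. -/
inductive WF : Orch → Prop where
  | one : WF .one
  | choice : ∀ l, l ≠ [] →
      ((∀ p ∈ l, OAct.catL p.1) ∨ (∀ p ∈ l, OAct.catR p.1) ∨
        (∃ μ g, OAct.catO μ ∧ l = [(μ, g)])) →
      (∀ p ∈ l, WF p.2) → WF (.choice l)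
  | var : ∀ x, WF (.var x)
  | mu : ∀ b, (∀ x, b ≠ .var x) → WF b → WF (.mu b)

/-- LTS of orchestrators (with equi-recursive unfolding). -/
inductive Step : Orch → OAct → Orch → Prop where
  | pre : ∀ l μ g, (μ, g) ∈ l → Step (Orch.choice l) μ g
  | unfold : ∀ b μ g, Step b.unfold μ g → Step (Orch.mu b) μ g

/-- Finite traces of an orchestrator. -/
inductive Trace : Orch → List OAct → Orch → Prop where
  | nil : ∀ f, Trace f [] f
  | cons : ∀ f μ g ms h, Step f μ g → Trace g ms h → Trace f (μ :: ms) h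

def NoStep (f : Orch) : Prop := ¬ ∃ μ g, Step f μ g

end Orch

/-- `f` is a session orchestrator: closed and well-formed. -/
def IsOrch (f : Orch) : Prop := f.ClosedAbove 0 ∧ f.WF

/-! ### Orchestrated systems ρ ∥_f σ -/

abbrev Conf := SC × Orch × SC

namespace Sys

/-- Internal (τ) steps of an orchestrated system. -/
inductive Tau : Conf → Conf → Prop where
  | client : ∀ ρ ρ' f σ, SC.Tau ρ ρ' → Tau (ρ, f, σ) (ρ', f, σ)
  | server : ∀ ρ f σ σ', SC.Tau σ σ' → Tau (ρ, f, σ) (ρ, f, σ')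

/-- Steps of an orchestrated system, labelled by the orchestration action performed. -/
inductive Step : Conf → OAct → Conf → Prop where
  | syncCS : ∀ ρ ρ' f f' σ σ' a, SC.Step ρ (Act.out a) ρ' → Orch.Step f (OAct.cSync a) f' →
      SC.Step σ (Act.inp a) σ' → Step (ρ, f, σ) (OAct.cSync a) (ρ', f', σ')
  | syncSC : ∀ ρ ρ' f f' σ σ' a, SC.Step ρ (Act.inp a) ρ' → Orch.Step f (OAct.sSync a) f' →
      SC.Step σ (Act.out a) σ' → Step (ρ, f, σ) (OAct.sSync a) (ρ', f', σ')
  | cIn : ∀ ρ ρ' f f' σ a, SC.Step ρ (Act.out a) ρ' → Orch.Step f (OAct.cIn a) f' →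
      Step (ρ, f, σ) (OAct.cIn a) (ρ', f', σ)
  | cOut : ∀ ρ ρ' f f' σ a, SC.Step ρ (Act.inp a) ρ' → Orch.Step f (OAct.cOut a) f' →
      Step (ρ, f, σ) (OAct.cOut a) (ρ', f', σ)
  | sIn : ∀ ρ f f' σ σ' a, Orch.Step f (OAct.sIn a) f' → SC.Step σ (Act.out a) σ' →
      Step (ρ, f, σ) (OAct.sIn a) (ρ, f', σ')
  | sOut : ∀ ρ f f' σ σ' a, Orch.Step f (OAct.sOut a) f' → SC.Step σ (Act.inp a) σ' →
      Step (ρ, f, σ) (OAct.sOut a) (ρ, f', σ')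

/-- Any number of τ-steps. -/
def TauRT : Conf → Conf → Prop := Relation.ReflTransGen Tau

/-- Weak labelled step `⟹^μ`. -/
def WStep (c : Conf) (μ : OAct) (c' : Conf) : Prop :=
  ∃ c₁ c₂, TauRT c c₁ ∧ Step c₁ μ c₂ ∧ TauRT c₂ c'

/-- `Exec c ms c'`: the system performs the finite sequence `ms` of orchestration
    actions (interspersed with τ-steps), i.e. `c ⟹^{ms} c'`. -/
inductive Exec : Conf → List OAct → Conf → Prop where
  | nil : ∀ c c', TauRT c c' → Exec c [] c'
  | cons : ∀ c c₁ c₂ μ ms c', TauRT c c₁ → Step c₁ μ c₂ → Exec c₂ ms c' →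
      Exec c (μ :: ms) c'

/-- Infinite executions along the infinite sequence `s` of orchestration actions. -/
def InfExec (c : Conf) (s : ℕ → OAct) : Prop :=
  ∃ cs : ℕ → Conf, cs 0 = c ∧ ∀ n, WStep (cs n) (s n) (cs (n + 1))

/-- `c ↛`: no τ-step and no labelled step is possible. -/
def Stuck (c : Conf) : Prop := (¬ ∃ c', Tau c c') ∧ (¬ ∃ μ c', Step c μ c')

end Sys

/-- `f` is ρ·σ strict: every finite trace of `f` can be performed by the
    orchestrated system ρ ∥_f σ. -/
def Strict (ρ : SC) (f : Orch) (σ : SC) : Prop :=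
  ∀ ms g, Orch.Trace f ms g → ∃ c', Sys.Exec (ρ, f, σ) ms c'

/-- Disrespectful strict compliance `f : ρ ⊣⊩ᵈˢ σ`. -/
def DSCompliant (f : Orch) (ρ σ : SC) : Prop :=
  Strict ρ f σ ∧
  ∀ ms ρ' f' σ', Sys.Exec (ρ, f, σ) ms (ρ', f', σ') → Sys.Stuck (ρ', f', σ') → ρ' = SC.one

/-! ### Buffers and respectfulness -/

/-- The contribution of one orchestration action to the two buffer counters
    (client-to-server, server-to-client) for the name `a`. -/
def OAct.delta : OAct → Name → ℤ × ℤ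
  | .cIn b, a => (if b = a then 1 else 0, 0)
  | .cOut b, a => (if b = a then -1 else 0, 0)
  | .sIn b, a => (0, if b = a then 1 else 0)
  | .sOut b, a => (0, if b = a then -1 else 0)
  | _, _ => (0, 0)

/-- The state of the (initially empty) buffer for name `a` after the finite sequence
    `ms`: `(client-to-server count, server-to-client count)`. -/
def bufCount (ms : List OAct) (a : Name) : ℤ × ℤ :=
  ((ms.map fun μ => (μ.delta a).1).sum, (ms.map fun μ => (μ.delta a).2).sum)

/-- The actions kept by the left-restriction `μ⃗↾ₐ`: exactly ⟨ε,ā⟩ and ⟨a,ε⟩. -/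
def OAct.keepA (a : Name) (μ : OAct) : Prop := μ = OAct.sOut a ∨ μ = OAct.cIn a

def OAct.isSIn : OAct → Prop
  | .sIn _ => True
  | _ => False

/-- A finite or infinite sequence of orchestration actions. -/
inductive OSeq : Type where
  | fin : List OAct → OSeq
  | inf : (ℕ → OAct) → OSeq

namespace OSeq

/-- The finite prefixes of a sequence. -/
def prefixes : OSeq → Set (List OAct)
  | .fin l => {t | t <+: l}
  | .inf s => {t | ∃ n, t = (List.range n).map s}

/-- Soundness: along every prefix, both buffer counts of every name stay ≥ 0. -/
def Sound (v : OSeq) : Prop :=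
  ∀ t ∈ v.prefixes, ∀ a, 0 ≤ (bufCount t a).1 ∧ 0 ≤ (bufCount t a).2

/-- The left-restriction `μ⃗↾ₐ` is finite. -/
def restrFinite : OSeq → Name → Prop
  | .fin _, _ => True
  | .inf s, a => ∃ N, ∀ n, N ≤ n → ¬ OAct.keepA a (s n)

/-- "After all of μ⃗ the client-to-server count of `a` is 0." -/
def csFinalZero : OSeq → Name → Prop
  | .fin l, a => (bufCount l a).1 = 0
  | .inf s, a => ∃ N, ∀ n, N ≤ n → (bufCount ((List.range n).map s) a).1 = 0

/-- The left-restriction `μ⃗↾ₐ` is definitely-⟨a,ε⟩: from some point on, every element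
    of μ⃗ kept by the restriction is ⟨a,ε⟩. -/
def defCIn : OSeq → Name → Prop
  | .fin _, _ => True
  | .inf s, a => ∃ N, ∀ n, N ≤ n → OAct.keepA a (s n) → s n = OAct.cIn a

/-- Client-respectfulness of a sequence. -/
def ClientRespectful (v : OSeq) : Prop :=
  ∀ a, (v.restrFinite a ∧ v.csFinalZero a) ∨ (¬ v.restrFinite a ∧ ¬ v.defCIn a)

/-- Non-definitely server-inputted sequences. -/
def NonDefSI : OSeq → Prop
  | .fin _ => True
  | .inf s => ¬ ∃ N, ∀ n, N ≤ n → OAct.isSIn (s n)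

/-- Respectful sequences. -/
def Respectful (v : OSeq) : Prop := v.Sound ∧ v.ClientRespectful ∧ v.NonDefSI

end OSeq

/-- Maximal traces of an orchestrator: finite traces ending in an orchestrator without
    transitions, and infinite traces. -/
def Orch.MaxTrace (f : Orch) : OSeq → Prop
  | .fin ms => ∃ g, Orch.Trace f ms g ∧ g.NoStep
  | .inf s => ∃ fs : ℕ → Orch, fs 0 = f ∧ ∀ n, Orch.Step (fs n) (s n) (fs (n + 1))

/-- A respectful orchestrator: all its maximal traces are respectful. -/
def Orch.Respectful (f : Orch) : Prop := ∀ v, f.MaxTrace v → v.Respectful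

/-- Orchestrated session compliance `f : ρ ⊣⊩ σ`. -/
def Compliant (f : Orch) (ρ σ : SC) : Prop :=
  (∀ ms ρ' f' σ', Sys.Exec (ρ, f, σ) ms (ρ', f', σ') → Sys.Stuck (ρ', f', σ') →
      ρ' = SC.one ∧ OSeq.Respectful (.fin ms)) ∧
  (∀ s : ℕ → OAct, Sys.InfExec (ρ, f, σ) s → OSeq.Respectful (.inf s))

/-- `ρ ⊣⊩ σ`: some session orchestrator makes `ρ` compliant with `σ`. -/
def Comply (ρ σ : SC) : Prop := ∃ f, IsOrch f ∧ Compliant f ρ σ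

/-- `ρ ⊣⊩ᵈˢ σ`. -/
def DSComply (ρ σ : SC) : Prop := ∃ f, IsOrch f ∧ DSCompliant f ρ σ
/-! ### The inference system ⊩ for orchestrated (disrespectful strict) compliance.
    Contexts are lists of pairs of session contracts, the de Bruijn index `i` referring
    to the `i`-th entry; going under a `rec`-binder pushes a new entry in front. -/

abbrev Ctx := List (SC × SC)

/-- An assumption set: distinct variables are assigned distinct pairs (injectivity),
    and all assumptions are about session contracts. -/
def GoodCtx (Γ : Ctx) : Prop :=
  Γ.Nodup ∧ ∀ p ∈ Γ, IsContract p.1 ∧ IsContract p.2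

/-- The inference system `Γ ⊩ f : ρ ⊣⊩ᵈˢ σ`. -/
inductive Judg : Ctx → Orch → SC → SC → Prop where
  | ax : ∀ Γ σ, Judg Γ .one .one σ
  | hyp : ∀ Γ x ρ σ, Γ[x]? = some (ρ, σ) → Judg Γ (.var x) ρ σ
  | sumL : ∀ Γ l σ a ρp f', (a, ρp) ∈ l →
      Judg ((SC.ext l, σ) :: Γ) f' ρp σ →
      Judg Γ (.mu (.choice [(OAct.cOut a, f')])) (SC.ext l) σ
  | sumR : ∀ Γ ρ l a σp f', (a, σp) ∈ l →
      Judg ((ρ, SC.ext l) :: Γ) f' ρ σp →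
      Judg Γ (.mu (.choice [(OAct.sOut a, f')])) ρ (SC.ext l)
  | ooa : ∀ Γ lI lJ (F : Name × SC → Orch),
      (∀ p ∈ lJ, Judg ((SC.int lI, SC.int lJ) :: Γ) (F p) (SC.int lI) p.2) →
      Judg Γ (.mu (.choice (lJ.map fun p => (OAct.sIn p.1, F p)))) (SC.int lI) (SC.int lJ)
  | oob : ∀ Γ lI lJ (F : Name × SC → Orch),
      (∀ p ∈ lI, Judg ((SC.int lI, SC.int lJ) :: Γ) (F p) p.2 (SC.int lJ)) →
      Judg Γ (.mu (.choice (lI.map fun p => (OAct.cIn p.1, F p)))) (SC.int lI) (SC.int lJ)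
  | osum : ∀ Γ lI lJ (lH lK : List (Name × SC)) (FH FK : Name × SC → Orch) (G : Name × SC → SC),
      (∀ p, p ∈ lI ↔ p ∈ lH ∨ p ∈ lK) →
      (∀ p ∈ lK, (p.1, G p) ∈ lJ) →
      (∀ p ∈ lH, Judg ((SC.int lI, SC.ext lJ) :: Γ) (FH p) p.2 (SC.ext lJ)) →
      (∀ p ∈ lK, Judg ((SC.int lI, SC.ext lJ) :: Γ) (FK p) p.2 (G p)) →
      Judg Γ (.mu (.choice ((lH.map fun p => (OAct.cIn p.1, FH p)) ++
          (lK.map fun p => (OAct.cSync p.1, FK p)))))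
        (SC.int lI) (SC.ext lJ)
  | sumO : ∀ Γ lI lJ (lH lK : List (Name × SC)) (FH FK : Name × SC → Orch) (G : Name × SC → SC),
      (∀ p, p ∈ lJ ↔ p ∈ lH ∨ p ∈ lK) →
      (∀ p ∈ lK, (p.1, G p) ∈ lI) →
      (∀ p ∈ lH, Judg ((SC.ext lI, SC.int lJ) :: Γ) (FH p) (SC.ext lI) p.2) →
      (∀ p ∈ lK, Judg ((SC.ext lI, SC.int lJ) :: Γ) (FK p) (G p) p.2) →
      Judg Γ (.mu (.choice ((lH.map fun p => (OAct.sIn p.1, FH p)) ++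
          (lK.map fun p => (OAct.sSync p.1, FK p)))))
        (SC.ext lI) (SC.int lJ)

/-- `θ ⊨ Γ`: the substitution `θ` assigns to each assumption of `Γ` a session
    orchestrator satisfying it. -/
def CtxSat (θ : List Orch) (Γ : Ctx) : Prop :=
  θ.length = Γ.length ∧
  ∀ i, i < Γ.length →
    IsOrch (θ.getD i .one) ∧
    DSCompliant (θ.getD i .one) (Γ.getD i (SC.one, SC.one)).1 (Γ.getD i (SC.one, SC.one)).2

/-- `Γ ⊨ f : ρ ⊣⊩ᵈˢ σ`. -/
def Models (Γ : Ctx) (f : Orch) (ρ σ : SC) : Prop :=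
  ∀ θ, CtxSat θ Γ → DSCompliant (f.msubst θ) ρ σ
/-! ### The synthesis algorithm `Synth`, implemented as a fuelled function.
    `SynthF fuel Γ ρ σ = none` means that `fuel` was not sufficient to complete the
    computation; `some F` means the computation terminated with result `F`. -/

mutual
/-- Boolean (syntactic) equality of raw session contracts. -/
def SC.beq : SC → SC → Bool
  | .one, .one => true
  | .ext l, .ext m => SC.beqL l m
  | .int l, .int m => SC.beqL l m
  | .var x, .var y => x == y
  | .mu s, .mu t => SC.beq s t
  | _, _ => false
def SC.beqL : List (Name × SC) → List (Name × SC) → Bool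
  | [], [] => true
  | (a, s) :: l, (b, t) :: m => a == b && SC.beq s t && SC.beqL l m
  | _, _ => false
end

def pairBeq (p q : SC × SC) : Bool := SC.beq p.1 q.1 && SC.beq p.2 q.2

def brBeq (p q : Name × SC) : Bool := p.1 == q.1 && SC.beq p.2 q.2

/-- The position of the assumption `ρ ⊣⊩ᵈˢ σ` in `Γ`, if any. -/
def ctxIndex (Γ : Ctx) (ρ σ : SC) : Option ℕ :=
  Γ.findIdx? (fun p => pairBeq p (ρ, σ))

/-- `optMapM f l`: monadic map over `Option`. -/
def optMapM (f : α → Option β) : List α → Option (List β)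
  | [] => some []
  | x :: xs => do
      let y ← f x
      let ys ← optMapM f xs
      pure (y :: ys)

/-- All ways of selecting one element from each list. -/
def selections : List (List α) → List (List α)
  | [] => [[]]
  | l :: ls => l.flatMap fun x => (selections ls).map fun r => x :: r

/-- The fuelled synthesis algorithm. -/
def SynthF : ℕ → Ctx → SC → SC → Option (List Orch)
  | 0, _, _, _ => none
  | fuel + 1, Γ, ρ, σ =>
    match ctxIndex Γ ρ σ with
    | some i => some [Orch.var i]
    | none =>
      match ρ, σ with
      | SC.one, _ => some [Orch.one]
      | SC.mu b, σ => SynthF fuel Γ b.unfold σ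
      | ρ, SC.mu b => SynthF fuel Γ ρ b.unfold
      | SC.ext lI, SC.ext lJ => do
          let Γ' := (SC.ext lI, SC.ext lJ) :: Γ
          let rs1 ← optMapM (fun p => do
              let fs ← SynthF fuel Γ' p.2 (SC.ext lJ)
              pure (fs.map fun f => Orch.mu (.choice [(OAct.cOut p.1, f)]))) lI
          let rs2 ← optMapM (fun p => do
              let fs ← SynthF fuel Γ' (SC.ext lI) p.2
              pure (fs.map fun f => Orch.mu (.choice [(OAct.sOut p.1, f)]))) lJ
          pure (rs1.flatten ++ rs2.flatten)
      | SC.int lI, SC.int lJ => do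
          let Γ' := (SC.int lI, SC.int lJ) :: Γ
          let fssI ← optMapM (fun p => SynthF fuel Γ' p.2 (SC.int lJ)) lI
          let fssJ ← optMapM (fun p => SynthF fuel Γ' (SC.int lI) p.2) lJ
          pure ((selections fssI).map (fun sel =>
                  Orch.mu (.choice (List.zipWith (fun p f => (OAct.cIn p.1, f)) lI sel)))
             ++ (selections fssJ).map (fun sel =>
                  Orch.mu (.choice (List.zipWith (fun p f => (OAct.sIn p.1, f)) lJ sel))))
      | SC.int lI, SC.ext lJ => do
          let Γ' := (SC.int lI, SC.ext lJ) :: Γ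
          let splits := lI.sublists.flatMap fun lH => lI.sublists.filterMap fun lK =>
              if (lI.all fun p => lH.any (brBeq p) || lK.any (brBeq p)) &&
                 (lK.all fun p => lJ.any fun q => q.1 == p.1)
              then some (lH, lK) else none
          let rsSplit ← optMapM (fun hk : List (Name × SC) × List (Name × SC) => do
              let fssH ← optMapM (fun p => SynthF fuel Γ' p.2 (SC.ext lJ)) hk.1
              let fssK ← optMapM (fun p => do
                  let σk ← List.lookup p.1 lJ
                  SynthF fuel Γ' p.2 σk) hk.2
              pure ((selections fssH).flatMap fun selH =>
                    (selections fssK).map fun selK =>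
                      Orch.mu (.choice (List.zipWith (fun p f => (OAct.cIn p.1, f)) hk.1 selH
                        ++ List.zipWith (fun p f => (OAct.cSync p.1, f)) hk.2 selK)))) splits
          let rs2 ← optMapM (fun p => do
              let fs ← SynthF fuel Γ' (SC.int lI) p.2
              pure (fs.map fun f => Orch.mu (.choice [(OAct.sOut p.1, f)]))) lJ
          pure (rsSplit.flatten ++ rs2.flatten)
      | SC.ext lI, SC.int lJ => do
          let Γ' := (SC.ext lI, SC.int lJ) :: Γ
          let splits := lJ.sublists.flatMap fun lH => lJ.sublists.filterMap fun lK =>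
              if (lJ.all fun p => lH.any (brBeq p) || lK.any (brBeq p)) &&
                 (lK.all fun p => lI.any fun q => q.1 == p.1)
              then some (lH, lK) else none
          let rsSplit ← optMapM (fun hk : List (Name × SC) × List (Name × SC) => do
              let fssH ← optMapM (fun p => SynthF fuel Γ' (SC.ext lI) p.2) hk.1
              let fssK ← optMapM (fun p => do
                  let ρk ← List.lookup p.1 lI
                  SynthF fuel Γ' ρk p.2) hk.2
              pure ((selections fssH).flatMap fun selH =>
                    (selections fssK).map fun selK =>
                      Orch.mu (.choice (List.zipWith (fun p f => (OAct.sIn p.1, f)) hk.1 selH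
                        ++ List.zipWith (fun p f => (OAct.sSync p.1, f)) hk.2 selK)))) splits
          let rs1 ← optMapM (fun p => do
              let fs ← SynthF fuel Γ' p.2 (SC.int lJ)
              pure (fs.map fun f => Orch.mu (.choice [(OAct.cOut p.1, f)]))) lI
          pure (rsSplit.flatten ++ rs1.flatten)
      | _, _ => some []

/-- `f ∈ Synth(Γ, ρ, σ)`. -/
def SynthMem (f : Orch) (Γ : Ctx) (ρ σ : SC) : Prop :=
  ∃ fuel F, SynthF fuel Γ ρ σ = some F ∧ f ∈ F

/-! Every recursive call of `SynthF` either unfolds a leading `rec` of one of the two contracts,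
or adds the current pair `(ρ, σ)` to the assumptions and passes to branches of `ρ` and `σ`. The
contracts met are thus derivatives of the initial ones, and a closed contract has only finitely
many derivatives, since each of them is a subterm closed by the recursions enclosing it. Hence
every assumption step uses up one of finitely many pairs, and in between only boundedly many
unfoldings happen, as by contractiveness each of them removes one leading `rec`. The resulting
measure bounds the fuel needed; above it the recursive calls, hence the results, no longer
depend on the fuel. -/

open Relation

namespace SC

inductive Dstep : SC → SC → Prop where
  | mu (b : SC) : Dstep (.mu b) b.unfold
  | ext (l : List (Name × SC)) {p : Name × SC} : p ∈ l → Dstep (.ext l) p.2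
  | int (l : List (Name × SC)) {p : Name × SC} : p ∈ l → Dstep (.int l) p.2

def derivatives (ρ : SC) : Set SC := {t | ReflTransGen Dstep ρ t}

def muD : SC → ℕ
  | .mu b => b.muD + 1
  | _ => 0

@[simp] theorem subst_ext (u : SC) (l : List (Name × SC)) (k : ℕ) :
    subst u (.ext l) k = .ext (l.map fun p => (p.1, subst u p.2 k)) := by
  simp [subst, List.map_attach_eq_pmap]

@[simp] theorem subst_int (u : SC) (l : List (Name × SC)) (k : ℕ) :
    subst u (.int l) k = .int (l.map fun p => (p.1, subst u p.2 k)) := by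
  simp [subst, List.map_attach_eq_pmap]

theorem subst_ne_var {b : SC} (hb : ∀ x, b ≠ .var x) (u : SC) (k x : ℕ) :
    subst u b k ≠ .var x := by
  cases b <;> simp [subst] at hb ⊢

theorem WF.subst {u s : SC} (hu : u.WF) (hs : s.WF) (k : ℕ) : (subst u s k).WF := by
  induction hs generalizing k with
  | one => simpa [SC.subst] using WF.one
  | ext l hne hnd _ ih =>
    rw [subst_ext]
    exact .ext _ (by simpa using hne) (by simpa [Function.comp_def] using hnd)
      (List.forall_mem_map.2 fun p hp => ih p hp k)
  | int l hne hnd _ ih =>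
    rw [subst_int]
    exact .int _ (by simpa using hne) (by simpa [Function.comp_def] using hnd)
      (List.forall_mem_map.2 fun p hp => ih p hp k)
  | var x =>
    rw [SC.subst]
    split
    · exact hu
    · exact .var x
  | mu b hb _ ih =>
    rw [SC.subst]
    exact .mu _ (fun x => subst_ne_var hb u (k + 1) x) (ih (k + 1))

theorem WF.dstep {t t' : SC} (ht : t.WF) (h : Dstep t t') : t'.WF := by
  cases h with
  | mu b => exact ht.subst (by cases ht; assumption) 0
  | ext l hp => cases ht with | ext _ _ _ h => exact h _ hp
  | int l hp => cases ht with | int _ _ _ h => exact h _ hp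

theorem WF.of_mem_derivatives {ρ t : SC} (hρ : ρ.WF) (ht : t ∈ ρ.derivatives) : t.WF := by
  induction ht with
  | refl => exact hρ
  | tail _ hd ih => exact ih.dstep hd

theorem muD_subst {b : SC} (hb : b.WF) (hnv : ∀ x, b ≠ .var x) (u : SC) (k : ℕ) :
    (subst u b k).muD = b.muD := by
  induction hb generalizing k with
  | var x => exact absurd rfl (hnv x)
  | mu c hc _ ih => simp only [SC.subst, muD, ih hc (k + 1)]
  | _ => simp [SC.subst, muD]

theorem WF.muD_mu {b : SC} (h : (SC.mu b).WF) : (SC.mu b).muD = b.unfold.muD + 1 := by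
  cases h with
  | mu _ hnv hb => rw [unfold, muD_subst hb hnv]; rfl

mutual
theorem beq_refl : ∀ s : SC, s.beq s = true
  | .one => rfl
  | .ext l => beqL_refl l
  | .int l => beqL_refl l
  | .var x => by simp [SC.beq]
  | .mu s => by rw [SC.beq]; exact beq_refl s
theorem beqL_refl : ∀ l : List (Name × SC), SC.beqL l l = true
  | [] => rfl
  | (a, s) :: l => by simp [SC.beqL, beq_refl s, beqL_refl l]
end

theorem sizeOf_snd_lt_of_mem {p : Name × SC} {l : List (Name × SC)} (h : p ∈ l) :
    sizeOf p.2 < 1 + sizeOf l := by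
  have := List.sizeOf_lt_of_mem h
  obtain ⟨a, s⟩ := p
  simp only [Prod.mk.sizeOf_spec] at this ⊢
  omega

/-- `substEnv env s k` replaces each free variable `k + i` of `s` by `env[i]`. -/
def substEnv (env : List SC) : SC → ℕ → SC
  | .one, _ => .one
  | .ext l, k => .ext (l.map fun p => (p.1, substEnv env p.2 k))
  | .int l, k => .int (l.map fun p => (p.1, substEnv env p.2 k))
  | .var x, k => if x < k then .var x else env.getD (x - k) (.var x)
  | .mu b, k => .mu (substEnv env b (k + 1))
termination_by s => sizeOf s
decreasing_by all_goals simp_wf <;> exact sizeOf_snd_lt_of_mem ‹_›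

/-- The subterms of `s`, closed by `env` and by the recursions enclosing them. -/
def candidates : SC → List SC → List SC
  | .one, _ => [.one]
  | .var x, env => [env.getD x (.var x)]
  | .ext l, env => substEnv env (.ext l) 0 :: l.flatMap fun p => candidates p.2 env
  | .int l, env => substEnv env (.int l) 0 :: l.flatMap fun p => candidates p.2 env
  | .mu b, env => substEnv env (.mu b) 0 :: candidates b (substEnv env (.mu b) 0 :: env)
termination_by s => sizeOf s
decreasing_by all_goals simp_wf <;> exact sizeOf_snd_lt_of_mem ‹_›

theorem ClosedAbove.mono {s : SC} {m n : ℕ} (h : s.ClosedAbove m) (hmn : m ≤ n) :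
    s.ClosedAbove n := by
  induction h generalizing n with
  | one => exact .one _
  | ext l m _ ih => exact .ext _ _ fun p hp => ih p hp hmn
  | int l m _ ih => exact .int _ _ fun p hp => ih p hp hmn
  | var x m hx => exact .var _ _ (by omega)
  | mu b m _ ih => exact .mu _ _ (ih (by omega))

theorem ClosedAbove.subst_eq {e : SC} {m : ℕ} (h : e.ClosedAbove m) (u : SC) {k : ℕ}
    (hk : m ≤ k) : subst u e k = e := by
  induction h generalizing k with
  | one => simp [subst]
  | ext l m _ ih | int l m _ ih =>
    simp only [subst_ext, subst_int, ext.injEq, int.injEq]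
    conv_rhs => rw [← List.map_id l]
    exact List.map_congr_left fun p hp => by rw [ih p hp hk]; rfl
  | var x m hx => simp [subst]; omega
  | mu b m _ ih => simp [subst, ih (Nat.succ_le_succ hk)]

theorem ClosedAbove.substEnv_eq {s : SC} {k : ℕ} (h : s.ClosedAbove k) (env : List SC) :
    substEnv env s k = s := by
  induction h with
  | one => simp [substEnv]
  | ext l k _ ih | int l k _ ih =>
    simp only [substEnv, ext.injEq, int.injEq]
    conv_rhs => rw [← List.map_id l]
    exact List.map_congr_left fun p hp => by rw [ih p hp]; rfl
  | var x k hx => simp [substEnv, hx]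
  | mu b k _ ih => simp [substEnv, ih]

theorem subst_substEnv (u : SC) {env : List SC} (henv : ∀ e ∈ env, e.ClosedAbove 0) (b : SC)
    (k : ℕ) : subst u (substEnv env b (k + 1)) k = substEnv (u :: env) b k := by
  fun_induction substEnv (u :: env) b k with
  | case1 => simp [substEnv, subst]
  | case2 l k ih | case3 l k ih =>
    simp only [substEnv, subst_ext, subst_int, List.map_map]
    congr 1
    exact List.map_congr_left fun p hp => by simp [ih p hp]
  | case4 x k hx =>
    simp [substEnv, subst, Nat.lt_succ_of_lt hx, Nat.ne_of_lt hx]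
  | case5 x k hx =>
    rcases Nat.eq_or_lt_of_le (Nat.le_of_not_lt hx) with rfl | hlt
    · simp [substEnv, subst]
    · obtain ⟨i, rfl⟩ := Nat.exists_eq_add_of_lt hlt
      simp only [substEnv, show ¬ k + i + 1 < k + 1 by omega, if_false,
        show k + i + 1 - (k + 1) = i by omega, show k + i + 1 - k = i + 1 by omega,
        List.getD_cons_succ]
      by_cases hi : i < env.length
      · rw [List.getD_eq_getElem _ _ hi]
        exact (henv _ (List.getElem_mem hi)).subst_eq u (Nat.zero_le k)
      · rw [List.getD_eq_default _ _ (by omega)]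
        simp [subst]; omega
  | case6 b k ih => simp [substEnv, subst, ih]

theorem ClosedAbove.substEnv {env : List SC} (henv : ∀ e ∈ env, e.ClosedAbove 0) {s : SC}
    {k : ℕ} (hs : s.ClosedAbove (k + env.length)) : (SC.substEnv env s k).ClosedAbove k := by
  fun_induction SC.substEnv env s k with
  | case1 => exact .one _
  | case2 l k ih =>
    cases hs with
    | ext _ _ h => exact .ext _ _ (List.forall_mem_map.2 fun p hp => ih p hp (h p hp))
  | case3 l k ih =>
    cases hs with
    | int _ _ h => exact .int _ _ (List.forall_mem_map.2 fun p hp => ih p hp (h p hp))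
  | case4 x k hx => exact .var _ _ hx
  | case5 x k hx =>
    cases hs with
    | var _ _ hlt =>
      rw [List.getD_eq_getElem _ _ (by omega)]
      exact (henv _ (List.getElem_mem _)).mono (Nat.zero_le k)
  | case6 b k ih =>
    cases hs with | mu _ _ h => exact .mu _ _ (ih (by rwa [Nat.add_right_comm]))

theorem substEnv_mem_candidates (s : SC) (env : List SC) :
    substEnv env s 0 ∈ candidates s env := by
  cases s <;> simp [candidates, substEnv]

theorem eq_substEnv_of_dstep_substEnv_mu {env : List SC} (henv : ∀ e ∈ env, e.ClosedAbove 0)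
    {b t : SC} (h : Dstep (substEnv env (.mu b) 0) t) :
    t = substEnv (substEnv env (.mu b) 0 :: env) b 0 := by
  have hmu : substEnv env (.mu b) 0 = .mu (substEnv env b (0 + 1)) := by rw [substEnv]
  rw [hmu] at h ⊢
  cases h
  rw [unfold, ← hmu, subst_substEnv _ henv]

theorem dstep_mem_candidates {s : SC} {env : List SC} (henv : ∀ e ∈ env, e.ClosedAbove 0)
    (hs : s.ClosedAbove env.length) {t t' : SC} (ht : t ∈ candidates s env) (h : Dstep t t') :
    t' ∈ candidates s env ∨ ∃ e ∈ env, Dstep e t' := by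
  fun_induction candidates s env with
  | case1 => simp only [List.mem_singleton] at ht; subst ht; cases h
  | case2 x env =>
    simp only [List.mem_singleton] at ht
    cases hs with
    | var _ _ hx =>
      rw [ht, List.getD_eq_getElem _ _ hx] at h
      exact .inr ⟨_, List.getElem_mem hx, h⟩
  | case3 l env ih | case4 l env ih =>
    have hcl : ∀ p ∈ l, p.2.ClosedAbove env.length := by cases hs; assumption
    simp only [List.mem_cons, List.mem_flatMap] at ht ⊢
    rcases ht with rfl | ⟨p, hp, htp⟩
    · rw [substEnv] at h
      cases h
      obtain ⟨p, hp, rfl⟩ := List.mem_map.1 ‹_›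
      exact .inl (.inr ⟨p, hp, substEnv_mem_candidates _ _⟩)
    · exact (ih p hp henv (hcl p hp) htp).imp_left fun h' => .inr ⟨p, hp, h'⟩
  | case5 b env ih =>
    set u := substEnv env b.mu 0
    have hu : u.ClosedAbove 0 := ClosedAbove.substEnv henv (by simpa using hs)
    have hunf : ∀ t'', Dstep u t'' → t'' ∈ b.candidates (u :: env) := fun t'' h'' => by
      rw [eq_substEnv_of_dstep_substEnv_mu henv h'']
      exact substEnv_mem_candidates b _
    have hb : b.ClosedAbove (u :: env).length := by cases hs; simpa
    simp only [List.mem_cons] at ht ⊢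
    rcases ht with rfl | ht
    · exact .inl (.inr (hunf t' h))
    · rcases ih (List.forall_mem_cons.2 ⟨hu, henv⟩) hb ht with h' | ⟨e, he, h'⟩
      · exact .inl (.inr h')
      · rcases List.mem_cons.1 he with rfl | he
        · exact .inl (.inr (hunf t' h'))
        · exact .inr ⟨e, he, h'⟩

theorem derivatives_subset_candidates {ρ : SC} (hρ : ρ.ClosedAbove 0) :
    ρ.derivatives ⊆ {t | t ∈ candidates ρ []} := by
  intro t ht
  induction ht with
  | refl => simpa [hρ.substEnv_eq] using substEnv_mem_candidates ρ []
  | tail _ hd ih => simpa using dstep_mem_candidates (by simp) hρ ih hd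

theorem finite_derivatives {ρ : SC} (hρ : ρ.ClosedAbove 0) : ρ.derivatives.Finite :=
  (candidates ρ []).finite_toSet.subset (derivatives_subset_candidates hρ)

end SC

theorem notMem_of_ctxIndex_eq_none {Γ : Ctx} {ρ σ : SC} (h : ctxIndex Γ ρ σ = none) :
    (ρ, σ) ∉ Γ := fun hmem => by
  simpa [pairBeq, SC.beq_refl] using List.findIdx?_eq_none_iff.1 h _ hmem

@[congr] theorem optMapM_congr {α β : Type*} {f g : α → Option β} {l l' : List α} (hl : l = l')
    (h : ∀ x ∈ l', f x = g x) : optMapM f l = optMapM g l' := by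
  subst hl
  induction l with
  | nil => rfl
  | cons x l ih =>
    simp [optMapM, h x List.mem_cons_self, ih fun y hy => h y (List.mem_cons_of_mem x hy)]

theorem optMapM_isSome_iff {α β : Type*} {f : α → Option β} {l : List α} :
    (optMapM f l).isSome ↔ ∀ x ∈ l, (f x).isSome := by
  induction l with
  | nil => simp [optMapM]
  | cons x l ih =>
    rw [List.forall_mem_cons, ← ih, optMapM]
    cases f x <;> cases optMapM f l <;> simp

theorem Option.any_const {α : Type*} (b : Bool) (o : Option α) :
    o.any (fun _ => b) = (o.isSome && b) := by
  cases o <;> simp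

theorem List.mem_of_mem_lookup {α β : Type*} [BEq α] [LawfulBEq α] {a : α} {b : β}
    {l : List (α × β)} (h : b ∈ l.lookup a) : (a, b) ∈ l := by
  rw [Option.mem_def] at h
  induction l with
  | nil => simp at h
  | cons q l ih =>
    obtain ⟨c, d⟩ := q
    by_cases hc : a = c
    · subst hc
      simp_all
    · rw [List.lookup_cons, beq_false_of_ne hc] at h
      exact List.mem_cons_of_mem _ (ih h)

theorem List.isSome_lookup_of_mem {α β : Type*} [BEq α] [LawfulBEq α] {a : α}
    {l : List (α × β)} (h : ∃ q ∈ l, q.1 = a) : (l.lookup a).isSome := by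
  induction l with
  | nil => simp at h
  | cons q l ih =>
    obtain ⟨c, d⟩ := q
    by_cases hc : a = c
    · simp [hc]
    · rw [List.lookup_cons, beq_false_of_ne hc]
      simp only [List.mem_cons, exists_eq_or_imp, Ne.symm hc, false_or] at h
      exact ih h

theorem mem_sublistPairs {α : Type*} {l : List α} {c : List α → List α → Prop}
    [∀ lH lK, Decidable (c lH lK)] {hk : List α × List α} :
    (hk ∈ l.sublists.flatMap fun lH => l.sublists.filterMap fun lK =>
      if c lH lK then some (lH, lK) else none) ↔
      hk.1.Sublist l ∧ hk.2.Sublist l ∧ c hk.1 hk.2 := by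
  obtain ⟨lH, lK⟩ := hk
  simp only [List.mem_flatMap, List.mem_filterMap, List.mem_sublists]
  constructor
  · rintro ⟨lH', hH, lK', hK, h⟩
    split at h
    · cases h; exact ⟨hH, hK, ‹_›⟩
    · cases h
  · rintro ⟨hH, hK, hc⟩
    exact ⟨lH, hH, lK, hK, by simp [hc]⟩

/-- An over-approximation of the recursive calls `SynthF n Γ' ρ' σ'` made by
`SynthF (n + 1) Γ ρ σ`. -/
inductive SynthCall : Ctx → SC → SC → Ctx → SC → SC → Prop where
  | unfoldL {Γ : Ctx} {b σ : SC} : SynthCall Γ (.mu b) σ Γ b.unfold σ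
  | unfoldR {Γ : Ctx} {ρ b : SC} : SynthCall Γ ρ (.mu b) Γ ρ b.unfold
  | branch {Γ : Ctx} {ρ σ ρ' σ' : SC} : ctxIndex Γ ρ σ = none →
      ReflGen SC.Dstep ρ ρ' → ReflGen SC.Dstep σ σ' → SynthCall Γ ρ σ ((ρ, σ) :: Γ) ρ' σ'

attribute [local congr] Option.bind_congr' in
theorem synthF_succ_congr {n m : ℕ} {Γ : Ctx} {ρ σ : SC}
    (h : ∀ Γ' ρ' σ', SynthCall Γ ρ σ Γ' ρ' σ' → SynthF n Γ' ρ' σ' = SynthF m Γ' ρ' σ') :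
    SynthF (n + 1) Γ ρ σ = SynthF (m + 1) Γ ρ σ := by
  simp only [SynthF]
  split
  · rfl
  next hc =>
  have h' := fun ρ' σ' h₁ h₂ => h _ ρ' σ' (.branch hc h₁ h₂)
  split
  all_goals try rfl
  · exact h _ _ _ .unfoldL
  · exact h _ _ _ .unfoldR
  -- A branch is reached through the list of branches, a sublist of it, or a `lookup` in it.
  all_goals
    simp only [Option.pure_def, Option.bind_eq_bind]
    simp (disch := first
      | exact .refl
      | exact .single (.ext _ (List.mem_of_mem_lookup ‹_›))
      | exact .single (.int _ (List.mem_of_mem_lookup ‹_›))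
      | (first | refine .single (.ext _ ?_) | refine .single (.int _ ?_))
        first
        | assumption
        | exact (mem_sublistPairs.1 ‹_›).1.mem ‹_›
        | exact (mem_sublistPairs.1 ‹_›).2.1.mem ‹_›)
      only [h']

theorem synthF_succ_isSome {n : ℕ} {Γ : Ctx} {ρ σ : SC}
    (h : ∀ Γ' ρ' σ', SynthCall Γ ρ σ Γ' ρ' σ' → (SynthF n Γ' ρ' σ').isSome) :
    (SynthF (n + 1) Γ ρ σ).isSome := by
  simp only [SynthF]
  split
  · rfl
  next hc =>
  have h' := fun ρ' σ' h₁ h₂ => h _ ρ' σ' (.branch hc h₁ h₂)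
  split
  all_goals try rfl
  · exact h _ _ _ .unfoldL
  · exact h _ _ _ .unfoldR
  all_goals simp only [Option.pure_def, Option.bind_eq_bind, optMapM_isSome_iff,
    Option.isSome_bind, Option.any_const, Option.isSome_some, Bool.and_true, Bool.and_eq_true,
    mem_sublistPairs]
  · exact ⟨fun p hp => h' _ _ (.single (.ext _ hp)) .refl,
      fun p hp => h' _ _ .refl (.single (.ext _ hp))⟩
  · exact ⟨fun p hp => h' _ _ (.single (.int _ hp)) .refl,
      fun p hp => h' _ _ .refl (.single (.int _ hp))⟩
  · refine ⟨fun hk ⟨hH, hK, hcond⟩ => ⟨fun p hp => h' _ _ (.single (.int _ (hH.subset hp))) .refl,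
      fun p hp => ?_⟩, fun p hp => h' _ _ .refl (.single (.ext _ hp))⟩
    simp only [List.all_eq_true, List.any_eq_true, beq_iff_eq] at hcond
    obtain ⟨σk, hσk⟩ := Option.isSome_iff_exists.1 (List.isSome_lookup_of_mem (hcond.2 p hp))
    rw [hσk]
    exact h' _ _ (.single (.int _ (hK.subset hp))) (.single (.ext _ (List.mem_of_mem_lookup hσk)))
  · refine ⟨fun hk ⟨hH, hK, hcond⟩ => ⟨fun p hp => h' _ _ .refl (.single (.int _ (hH.subset hp))),
      fun p hp => ?_⟩, fun p hp => h' _ _ (.single (.ext _ hp)) .refl⟩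
    simp only [List.all_eq_true, List.any_eq_true, beq_iff_eq] at hcond
    obtain ⟨ρk, hρk⟩ := Option.isSome_iff_exists.1 (List.isSome_lookup_of_mem (hcond.2 p hp))
    rw [hρk]
    exact h' _ _ (.single (.ext _ (List.mem_of_mem_lookup hρk))) (.single (.int _ (hK.subset hp)))

structure SynthDomain (T : Set SC) : Prop where
  finite : T.Finite
  wf : ∀ t ∈ T, t.WF
  dstep_mem : ∀ t ∈ T, ∀ t', SC.Dstep t t' → t' ∈ T

theorem synthDomain_derivatives_union {ρ σ : SC} (hρ : IsContract ρ) (hσ : IsContract σ) :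
    SynthDomain (ρ.derivatives ∪ σ.derivatives) where
  finite := (SC.finite_derivatives hρ.1).union (SC.finite_derivatives hσ.1)
  wf _ ht := ht.elim hρ.2.of_mem_derivatives hσ.2.of_mem_derivatives
  dstep_mem _ ht _ hd := ht.imp (·.tail hd) (·.tail hd)

/-- The coefficient exceeds `ρ'.muD + σ'.muD` for all `ρ' σ' ∈ T`, so that using up a pair of
`T × T` outweighs any change of the `rec`-depths. -/
noncomputable def synthMeasure (T : Set SC) (Γ : Ctx) (ρ σ : SC) : ℕ :=
  (2 * sSup (SC.muD '' T) + 1) * ((T ×ˢ T) \ {p | p ∈ Γ}).ncard + ρ.muD + σ.muD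

namespace SynthDomain

variable {T : Set SC}

theorem reflGen_mem (hT : SynthDomain T) {t t' : SC} (ht : t ∈ T) (h : ReflGen SC.Dstep t t') :
    t' ∈ T := by
  cases h with
  | refl => exact ht
  | single h => exact hT.dstep_mem t ht t' h

theorem muD_le (hT : SynthDomain T) {t : SC} (ht : t ∈ T) : t.muD ≤ sSup (SC.muD '' T) :=
  le_csSup (hT.finite.image _).bddAbove ⟨t, ht, rfl⟩

theorem synthCall_measure_lt (hT : SynthDomain T) {Γ Γ' : Ctx} {ρ σ ρ' σ' : SC}
    (hρ : ρ ∈ T) (hσ : σ ∈ T) (h : SynthCall Γ ρ σ Γ' ρ' σ') :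
    ρ' ∈ T ∧ σ' ∈ T ∧ synthMeasure T Γ' ρ' σ' < synthMeasure T Γ ρ σ := by
  cases h with
  | unfoldL =>
    have := (hT.wf _ hρ).muD_mu
    refine ⟨hT.dstep_mem _ hρ _ (.mu _), hσ, ?_⟩
    simp only [synthMeasure]
    omega
  | unfoldR =>
    have := (hT.wf _ hσ).muD_mu
    refine ⟨hρ, hT.dstep_mem _ hσ _ (.mu _), ?_⟩
    simp only [synthMeasure]
    omega
  | branch hc hρ' hσ' =>
    have hρ'T := hT.reflGen_mem hρ hρ'
    have hσ'T := hT.reflGen_mem hσ hσ'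
    refine ⟨hρ'T, hσ'T, ?_⟩
    have hfresh : (ρ, σ) ∈ (T ×ˢ T) \ {p | p ∈ Γ} := ⟨⟨hρ, hσ⟩, notMem_of_ctxIndex_eq_none hc⟩
    have hcount : ((T ×ˢ T) \ {p | p ∈ (ρ, σ) :: Γ}).ncard + 1 ≤
        ((T ×ˢ T) \ {p | p ∈ Γ}).ncard := by
      have hset : (T ×ˢ T) \ {p | p ∈ (ρ, σ) :: Γ} = ((T ×ˢ T) \ {p | p ∈ Γ}) \ {(ρ, σ)} := by
        ext; simp [or_comm, and_assoc]
      rw [hset, Nat.add_one_le_iff]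
      exact Set.ncard_sdiff_singleton_lt_of_mem hfresh (hT.finite.prod hT.finite).sdiff
    have := Nat.mul_le_mul_left (2 * sSup (SC.muD '' T) + 1) hcount
    have := hT.muD_le hρ'T
    have := hT.muD_le hσ'T
    simp only [synthMeasure]
    nlinarith

theorem synthF_isSome (hT : SynthDomain T) {n : ℕ} {Γ : Ctx} {ρ σ : SC} (hρ : ρ ∈ T)
    (hσ : σ ∈ T) (hn : synthMeasure T Γ ρ σ < n) : (SynthF n Γ ρ σ).isSome := by
  induction n generalizing Γ ρ σ with
  | zero => omega
  | succ n ih =>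
    refine synthF_succ_isSome fun Γ' ρ' σ' hcall => ?_
    obtain ⟨hρ', hσ', hlt⟩ := hT.synthCall_measure_lt hρ hσ hcall
    exact ih hρ' hσ' (by omega)

theorem synthF_eq (hT : SynthDomain T) {n m : ℕ} {Γ : Ctx} {ρ σ : SC} (hρ : ρ ∈ T)
    (hσ : σ ∈ T) (hn : synthMeasure T Γ ρ σ < n) (hm : synthMeasure T Γ ρ σ < m) :
    SynthF n Γ ρ σ = SynthF m Γ ρ σ := by
  induction n generalizing m Γ ρ σ with
  | zero => omega
  | succ n ih =>
    obtain ⟨m, rfl⟩ := Nat.exists_eq_add_of_lt hm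
    refine synthF_succ_congr fun Γ' ρ' σ' hcall => ?_
    obtain ⟨hρ', hσ', hlt⟩ := hT.synthCall_measure_lt hρ hσ hcall
    exact ih hρ' hσ' (by omega) (by omega)

theorem exists_synthF_eq_some (hT : SynthDomain T) (Γ : Ctx) {ρ σ : SC} (hρ : ρ ∈ T)
    (hσ : σ ∈ T) : ∃ N F, ∀ n, N ≤ n → SynthF n Γ ρ σ = some F := by
  have hN := Nat.lt_succ_self (synthMeasure T Γ ρ σ)
  obtain ⟨F, hF⟩ := Option.isSome_iff_exists.1 (hT.synthF_isSome hρ hσ hN)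
  exact ⟨_, F, fun n hn => (hT.synthF_eq hρ hσ hn hN).trans hF⟩

end SynthDomain

/-- Termination of the synthesis algorithm: for every finite assumption set
Γ and all session contracts ρ, σ, the recursive computation of Synth(Γ,ρ,σ) terminates:
some amount of fuel suffices, and any larger amount of fuel yields the same finite set of
orchestrators, so Synth is a well-defined total function. -/
theorem synth_terminates :
    ∀ (Γ : Ctx) (ρ σ : SC), GoodCtx Γ → IsContract ρ → IsContract σ →
      ∃ (fuel : ℕ) (F : List Orch), SynthF fuel Γ ρ σ = some F ∧
        ∀ fuel', fuel ≤ fuel' → SynthF fuel' Γ ρ σ = some F := by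
  intro Γ ρ σ _ hρ hσ
  obtain ⟨N, F, hF⟩ :=
    (synthDomain_derivatives_union hρ hσ).exists_synthF_eq_some Γ (.inl .refl) (.inr .refl)
  exact ⟨N, F, hF N le_rfl, hF⟩
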